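/- The measure ℙ† defined from the family (P†_s : s ∈ S) and a strictly positive vector π† = (π†_s : s ∈ S) by ℙ†(B) = ∑_{s∈S} π†_s ∑_{n≥0} P†_s({𝒯 > n} ∩ Θ_n^{-1}B) is a probability measure on K^ℕ if and only if ∑_{s∈S} π†_s · E†_s(𝒯) = 1, where E†_s denotes expectation under P†_s. Consequently, there exists a strictly positive vector π† making ℙ† a probability measure if and only if E†_s(𝒯) < ∞ for every s ∈ S. -/

import Mathlib

/-!
Splitting `ℙ†` along the excursion index `n`, its total mass is
`∑_s π†_s ∑_n P†_s(𝒯 > n)`, and the tail-sum formula for `ℕ∞`-valued variables turns the inner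
sum into `E†_s(𝒯)`. Being a probability measure is thus the normalisation
`∑_s π†_s E†_s(𝒯) = 1`. Since `𝒯 ≥ 1`, every `E†_s(𝒯)` is nonzero, so constant weights
`π†_s = (∑_s E†_s(𝒯))⁻¹` normalise exactly when all expectations are finite, while an infinite
one makes `π†_s E†_s(𝒯) = ∞` for every positive weight.
-/

open MeasureTheory Filter
open scoped ENNReal NNReal ENat

variable {I : Type*} [MeasurableSpace I]

/-- The shift map `Θ_q` on `K^ℕ` where `K = I × ℝ`. -/
def shiftK (q : ℕ) (w : ℕ → I × ℝ) : ℕ → I × ℝ := fun n => w (n + q)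

/-- The hitting time of a different class in the random model:
`𝒯(w) = inf {n > 0 : 𝒳_n(w) ∈ V \ 𝒞(𝒳_0(w))}` (with `inf ∅ = ∞`), where
`V = ⋃_{s ∈ S} {s} × R_s` and `𝒞(s, r) = ⋃_{s' ∈ C(s)} {s'} × R_{s'}`. -/
noncomputable def hitTK (S : Finset I) (sim : I → I → Prop) (Rs : I → Set ℝ)
    (w : ℕ → I × ℝ) : ℕ∞ :=
  sInf ((fun n : ℕ => (n : ℕ∞)) ''
    {n : ℕ | 0 < n ∧ (w n).1 ∈ S ∧ (w n).2 ∈ Rs ((w n).1) ∧ ¬ sim ((w 0).1) ((w n).1)})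

/-- The expectation `E(𝒯)` of the hitting time `𝒯` under `P`. -/
noncomputable def hitETK (S : Finset I) (sim : I → I → Prop) (Rs : I → Set ℝ)
    (P : Measure (ℕ → I × ℝ)) : ℝ≥0∞ :=
  ∫⁻ w, (hitTK S sim Rs w : ℝ≥0∞) ∂P

/-- The measure `ℙ†(B) = ∑_{s ∈ S} π†_s ∑_{n ≥ 0} P†_s({𝒯 > n} ∩ Θ_n⁻¹ B)` on `K^ℕ`. -/
noncomputable def lawPK (S : Finset I) (sim : I → I → Prop) (Rs : I → Set ℝ) (π : I → ℝ≥0)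
    (Pd : I → Measure (ℕ → I × ℝ)) : Measure (ℕ → I × ℝ) :=
  ∑ s ∈ S, π s •
    Measure.sum
      (fun n : ℕ => ((Pd s).restrict {w | (n : ℕ∞) < hitTK S sim Rs w}).map (shiftK n))

/-- The hitting time of a different class on `I^ℕ`:
`T(x) = inf {n > 0 : x n ∈ S \ C(x 0)}` (with `inf ∅ = ∞`). -/
noncomputable def hitT (S : Finset I) (sim : I → I → Prop) (x : ℕ → I) : ℕ∞ :=
  sInf ((fun n : ℕ => (n : ℕ∞)) '' {n : ℕ | 0 < n ∧ x n ∈ S ∧ ¬ sim (x 0) (x n)})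


theorem ENat.toENNReal_eq_tsum_indicator (a : ℕ∞) :
    (a : ℝ≥0∞) = ∑' n : ℕ, {n : ℕ | (n : ℕ∞) < a}.indicator 1 n := by
  rw [← tsum_subtype]
  simp only [Pi.one_apply]
  rw [ENNReal.tsum_set_one]
  congr
  induction a using ENat.recTopCoe with
  | top => simp
  | coe m =>
    rw [show {n : ℕ | (n : ℕ∞) < m} = (Finset.range m : Set ℕ) by ext; simp,
      Set.encard_coe_eq_coe_finsetCard, Finset.card_range]

theorem ENat.natCast_lt_sInf_image_iff {A : Set ℕ} {n : ℕ} :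
    (n : ℕ∞) < sInf ((↑) '' A) ↔ ∀ k ∈ A, n < k := by
  rw [← ENat.add_one_le_iff (ENat.natCast_ne_top n), le_sInf_iff, Set.forall_mem_image]
  refine forall₂_congr fun k _ => ?_
  rw [ENat.add_one_le_iff (ENat.natCast_ne_top n), Nat.cast_lt]

theorem MeasureTheory.lintegral_enat_eq_tsum {α : Type*} [MeasurableSpace α] (μ : Measure α)
    {f : α → ℕ∞} (hf : ∀ n : ℕ, MeasurableSet {x | (n : ℕ∞) < f x}) :
    ∫⁻ x, (f x : ℝ≥0∞) ∂μ = ∑' n : ℕ, μ {x | (n : ℕ∞) < f x} := by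
  have h : ∀ x, (f x : ℝ≥0∞) = ∑' n : ℕ, {x | (n : ℕ∞) < f x}.indicator 1 x := fun x => by
    rw [ENat.toENNReal_eq_tsum_indicator]
    rfl
  simp_rw [h]
  rw [lintegral_tsum fun n => (measurable_one.indicator (hf n)).aemeasurable]
  simp_rw [lintegral_indicator_one (hf _)]

theorem ENNReal.exists_pos_weights_sum_mul_eq_one_iff {ι : Type*} {s : Finset ι}
    {e : ι → ℝ≥0∞} (he : ∃ i ∈ s, e i ≠ 0) :
    (∃ π : ι → ℝ≥0, (∀ i ∈ s, 0 < π i) ∧ ∑ i ∈ s, (π i : ℝ≥0∞) * e i = 1) ↔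
      ∀ i ∈ s, e i < ⊤ := by
  constructor
  · rintro ⟨π, hπ, hsum⟩ i hi
    have hle : (π i : ℝ≥0∞) * e i ≤ 1 :=
      hsum ▸ Finset.single_le_sum (f := fun i => (π i : ℝ≥0∞) * e i) (fun _ _ => zero_le) hi
    refine lt_top_iff_ne_top.mpr fun htop => ?_
    rw [htop, ENNReal.mul_top (ENNReal.coe_ne_zero.mpr (hπ i hi).ne')] at hle
    exact absurd hle (by simp)
  · intro hfin
    set A := ∑ i ∈ s, e i
    have hA_top : A ≠ ⊤ := (ENNReal.sum_lt_top.mpr hfin).ne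
    have hA_zero : A ≠ 0 := by
      obtain ⟨i, hi, hei⟩ := he
      exact (pos_iff_ne_zero.mpr hei |>.trans_le (Finset.single_le_sum (fun _ _ => zero_le) hi)).ne'
    have hA_nnreal : 0 < A.toNNReal := ENNReal.toNNReal_pos hA_zero hA_top
    refine ⟨fun _ => A.toNNReal⁻¹, fun _ _ => inv_pos.mpr hA_nnreal, ?_⟩
    rw [← Finset.mul_sum, ENNReal.coe_inv hA_nnreal.ne', ENNReal.coe_toNNReal hA_top,
      ENNReal.inv_mul_cancel hA_zero hA_top]

section HitTK

variable {ι : Type*} (S : Finset ι) (sim : ι → ι → Prop) (Rs : ι → Set ℝ)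

theorem natCast_lt_hitTK_iff (w : ℕ → ι × ℝ) (n : ℕ) :
    (n : ℕ∞) < hitTK S sim Rs w ↔ ∀ k, 0 < k → k ≤ n →
      ¬ ((w k).1 ∈ S ∧ (w k).2 ∈ Rs (w k).1 ∧ ¬ sim (w 0).1 (w k).1) := by
  rw [hitTK, ENat.natCast_lt_sInf_image_iff]
  refine forall_congr' fun k => ?_
  simp only [Set.mem_ofPred_eq, and_imp]
  constructor
  · intro h hk hkn hent
    exact absurd (h hk hent.1 hent.2.1 hent.2.2) (not_lt.mpr hkn)
  · intro h hk hkS hkR hks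
    exact lt_of_not_ge fun hkn => h hk hkn ⟨hkS, hkR, hks⟩

theorem one_le_hitTK (w : ℕ → ι × ℝ) : 1 ≤ hitTK S sim Rs w :=
  Order.one_le_iff_pos.mpr <| by
    exact_mod_cast (natCast_lt_hitTK_iff S sim Rs w 0).mpr fun k hk hk0 => absurd hk0 hk.not_ge

end HitTK

theorem measurable_shiftK (q : ℕ) : Measurable (shiftK (I := I) q) :=
  measurable_pi_lambda _ fun n => measurable_pi_apply (n + q)

section MeasurableHitTK

variable (S : Finset I) (sim : I → I → Prop) (Rs : I → Set ℝ)

theorem measurableSet_natCast_lt_hitTK [Countable I] [MeasurableSingletonClass I]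
    (hRmeas : ∀ s ∈ S, MeasurableSet (Rs s)) (n : ℕ) :
    MeasurableSet {w : ℕ → I × ℝ | (n : ℕ∞) < hitTK S sim Rs w} := by
  have hentry : ∀ k, MeasurableSet {w : ℕ → I × ℝ |
      (w k).1 ∈ S ∧ (w k).2 ∈ Rs (w k).1 ∧ ¬ sim (w 0).1 (w k).1} := by
    intro k
    have hunion : {w : ℕ → I × ℝ | (w k).1 ∈ S ∧ (w k).2 ∈ Rs (w k).1 ∧ ¬ sim (w 0).1 (w k).1} =
        ⋃ i ∈ S, {w | (w k).1 = i} ∩ {w | (w k).2 ∈ Rs i} ∩ {w | ¬ sim (w 0).1 i} := by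
      ext w
      simp only [Set.mem_ofPred_eq, Set.mem_iUnion, Set.mem_inter_iff, exists_prop]
      constructor
      · rintro ⟨hS, hR, hsim⟩
        exact ⟨_, hS, ⟨rfl, hR⟩, hsim⟩
      · rintro ⟨i, hi, ⟨rfl, hR⟩, hsim⟩
        exact ⟨hi, hR, hsim⟩
    have h0 : Measurable fun w : ℕ → I × ℝ => (w 0).1 := (measurable_pi_apply 0).fst
    have hk1 : Measurable fun w : ℕ → I × ℝ => (w k).1 := (measurable_pi_apply k).fst
    have hk2 : Measurable fun w : ℕ → I × ℝ => (w k).2 := (measurable_pi_apply k).snd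
    rw [hunion]
    refine Finset.measurableSet_biUnion S fun i hi => ?_
    exact ((hk1 (measurableSet_singleton i)).inter (hk2 (hRmeas i hi))).inter
      (h0 (Set.to_countable {j | ¬ sim j i}).measurableSet)
  simp_rw [natCast_lt_hitTK_iff, Set.ofPred_forall]
  exact .iInter fun k => .iInter fun _ => .iInter fun _ => (hentry k).compl

theorem hitETK_eq_tsum [Countable I] [MeasurableSingletonClass I]
    (hRmeas : ∀ s ∈ S, MeasurableSet (Rs s)) (μ : Measure (ℕ → I × ℝ)) :
    hitETK S sim Rs μ = ∑' n : ℕ, μ {w | (n : ℕ∞) < hitTK S sim Rs w} :=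
  lintegral_enat_eq_tsum μ (measurableSet_natCast_lt_hitTK S sim Rs hRmeas)

theorem one_le_hitETK (μ : Measure (ℕ → I × ℝ)) [IsProbabilityMeasure μ] :
    1 ≤ hitETK S sim Rs μ :=
  calc (1 : ℝ≥0∞) = ∫⁻ _, 1 ∂μ := by rw [lintegral_one, measure_univ]
    _ ≤ hitETK S sim Rs μ := lintegral_mono fun w => by
      simpa using ENat.toENNReal_le.mpr (one_le_hitTK S sim Rs w)

theorem lawPK_apply_univ [Countable I] [MeasurableSingletonClass I]
    (hRmeas : ∀ s ∈ S, MeasurableSet (Rs s)) (π : I → ℝ≥0) (Pd : I → Measure (ℕ → I × ℝ)) :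
    lawPK S sim Rs π Pd Set.univ = ∑ s ∈ S, (π s : ℝ≥0∞) * hitETK S sim Rs (Pd s) := by
  rw [lawPK, Measure.finsetSum_apply]
  refine Finset.sum_congr rfl fun s _ => ?_
  rw [Measure.smul_apply, Measure.sum_apply _ MeasurableSet.univ, ENNReal.smul_def, smul_eq_mul,
    hitETK_eq_tsum S sim Rs hRmeas]
  congr 1
  refine tsum_congr fun n => ?_
  rw [Measure.map_apply (measurable_shiftK n) MeasurableSet.univ, Set.preimage_univ,
    Measure.restrict_apply_univ]

end MeasurableHitTK

theorem stmt_15_general [Fintype I] [MeasurableSingletonClass I]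
    (S : Finset I) (hS : S.Nonempty)
    (sim : I → I → Prop)
    (Rs : I → Set ℝ) (hRmeas : ∀ s ∈ S, MeasurableSet (Rs s))
    (Pd : I → Measure (ℕ → I × ℝ)) (hdprob : ∀ s ∈ S, IsProbabilityMeasure (Pd s)) :
    (∀ π : I → ℝ≥0, (∀ s ∈ S, 0 < π s) →
      (IsProbabilityMeasure (lawPK S sim Rs π Pd) ↔
        ∑ s ∈ S, (π s : ℝ≥0∞) * hitETK S sim Rs (Pd s) = 1)) ∧
    ((∃ π : I → ℝ≥0, (∀ s ∈ S, 0 < π s) ∧ IsProbabilityMeasure (lawPK S sim Rs π Pd)) ↔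
      ∀ s ∈ S, hitETK S sim Rs (Pd s) < ⊤) := by
  have hprob_iff : ∀ π, IsProbabilityMeasure (lawPK S sim Rs π Pd) ↔
      ∑ s ∈ S, (π s : ℝ≥0∞) * hitETK S sim Rs (Pd s) = 1 := fun π => by
    rw [isProbabilityMeasure_iff, lawPK_apply_univ S sim Rs hRmeas]
  refine ⟨fun π _ => hprob_iff π, ?_⟩
  simp only [hprob_iff]
  refine ENNReal.exists_pos_weights_sum_mul_eq_one_iff ?_
  obtain ⟨s, hs⟩ := hS
  have := hdprob s hs
  exact ⟨s, hs, (zero_lt_one.trans_le (one_le_hitETK S sim Rs (Pd s))).ne'⟩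

/-- For a fixed strictly positive weight vector `π†`, the measure `ℙ†` is a probability
measure iff `∑_{s ∈ S} π†_s E†_s(𝒯) = 1`; consequently there is some strictly positive `π†`
making `ℙ†` a probability measure iff `E†_s(𝒯) < ∞` for every `s ∈ S`. -/
theorem stmt_15 [Fintype I] [DecidableEq I] [MeasurableSingletonClass I]
    (S : Finset I) (hS : S.Nonempty) (hSc : ∃ i : I, i ∉ S)
    (sim : I → I → Prop) (hsim : Equivalence sim)
    (Rs : I → Set ℝ) (hRmeas : ∀ s ∈ S, MeasurableSet (Rs s))
    (hRsub : ∀ s ∈ S, Rs s ⊆ Set.Icc (0 : ℝ) 1)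
    (hRpos : ∀ s ∈ S, 0 < volume (Rs s))
    (P : I → Measure (ℕ → I)) (hprob : ∀ s ∈ S, IsProbabilityMeasure (P s))
    (hstart : ∀ s ∈ S, P s {x | x 0 = s} = 1)
    (hTfin : ∀ s ∈ S, P s {x | hitT S sim x < ⊤} = 1)
    (Pd : I → Measure (ℕ → I × ℝ)) (hdprob : ∀ s ∈ S, IsProbabilityMeasure (Pd s))
    (hcyl : ∀ s ∈ S, ∀ (m : ℕ) (i : ℕ → I) (R' : ℕ → Set ℝ),
      (∀ k ≤ m, MeasurableSet (R' k)) →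
      Pd s {w | ∀ k ≤ m, (w k).1 = i k ∧ (w k).2 ∈ R' k} =
        (if i 0 = s then 1 else 0) * (volume (R' 0 ∩ Rs s) / volume (Rs s)) *
          P s {x | ∀ k ≤ m, x k = i k} *
          ∏ k ∈ Finset.Icc 1 m, volume (R' k ∩ Set.Icc (0 : ℝ) 1))
    (hTKfin : ∀ s ∈ S, Pd s {w | hitTK S sim Rs w < ⊤} = 1) :
    (∀ π : I → ℝ≥0, (∀ s ∈ S, 0 < π s) →
      (IsProbabilityMeasure (lawPK S sim Rs π Pd) ↔
        ∑ s ∈ S, (π s : ℝ≥0∞) * hitETK S sim Rs (Pd s) = 1)) ∧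
    ((∃ π : I → ℝ≥0, (∀ s ∈ S, 0 < π s) ∧ IsProbabilityMeasure (lawPK S sim Rs π Pd)) ↔
      ∀ s ∈ S, hitETK S sim Rs (Pd s) < ⊤) :=
  stmt_15_general S hS sim Rs hRmeas Pd hdprob
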